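/- Let H be a nonempty set of vertices of a ℤⁿ-quiver Q with P(H) = H. Let v₀,…,v_m be vertices of Q forming an oriented polygon, and let w₀,…,w_m be their respective shadows in H. Then w₀,…,w_m form an oriented polygon (in the relaxed sense where the collections of arrow types are allowed to be empty). -/
import Mathlib


/- Background definitions: ℤⁿ-quivers, linked nets, and associated notions,
following Esteves–Santos–Vital, "Quiver representations arising from
degenerations of linear series, II". -/

open CategoryTheory CategoryTheory.Limits

namespace LNet
universe w

section QuiverDefs

variable {V : Type*} [Quiver.{w+1} V] {n : ℕ}

/-- The number of arrows of type `t` occurring in the path `p`. -/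
def typeCount (τ : ∀ {a b : V}, (a ⟶ b) → Fin (n + 1)) :
    ∀ {a b : V}, Quiver.Path a b → Fin (n + 1) → ℕ
  | _, _, Quiver.Path.nil, _ => 0
  | _, _, Quiver.Path.cons p e, t => typeCount τ p t + (if τ e = t then 1 else 0)

variable (τ : ∀ {a b : V}, (a ⟶ b) → Fin (n + 1))

/-- A path is admissible if it contains no arrow of at least one arrow type. -/
def Admissible {a b : V} (p : Quiver.Path a b) : Prop :=
  ∃ t : Fin (n + 1), typeCount τ p t = 0

/-- A path is simple if it contains at most one arrow of each type. -/
def SimplePath {a b : V} (p : Quiver.Path a b) : Prop :=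
  ∀ t : Fin (n + 1), typeCount τ p t ≤ 1

/-- Two paths with the same source have no arrow type in common. -/
def NoCommonType {a b c : V} (p : Quiver.Path a b) (q : Quiver.Path a c) : Prop :=
  ∀ t : Fin (n + 1), ¬(typeCount τ p t ≠ 0 ∧ typeCount τ q t ≠ 0)

/-- The quiver is a `ℤⁿ`-quiver with respect to the partition of its arrow set
into the `n + 1` types given by `τ`. -/
structure IsZnQuiver : Prop where
  uniqArrow : ∀ (a : V) (t : Fin (n + 1)), ∃! e : Σ b : V, a ⟶ b, τ e.2 = t
  connAdm : ∀ a b : V, ∃ p : Quiver.Path a b, Admissible τ p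
  targetEq : ∀ {a b c : V} (p : Quiver.Path a b) (q : Quiver.Path a c),
      b = c ↔ ∃ d : ℤ, ∀ t : Fin (n + 1),
        (typeCount τ p t : ℤ) - (typeCount τ q t : ℤ) = d

/-- `b = I · a`: there is a simple path from `a` to `b` with essential type `I`. -/
def StepBy (I : Set (Fin (n + 1))) (a b : V) : Prop :=
  ∃ p : Quiver.Path a b, SimplePath τ p ∧ ∀ t : Fin (n + 1), typeCount τ p t ≠ 0 ↔ t ∈ I

/-- Two distinct vertices connected by a simple path are neighbors. -/
def Neighbors (a b : V) : Prop :=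
  a ≠ b ∧ ((∃ p : Quiver.Path a b, SimplePath τ p) ∨ (∃ p : Quiver.Path b a, SimplePath τ p))

/-- A polygon is a nonempty finite set of pairwise neighboring vertices. -/
def IsPolygon (Δ : Finset V) : Prop :=
  Δ.Nonempty ∧ ∀ u ∈ Δ, ∀ v ∈ Δ, u ≠ v → Neighbors τ u v

/-- The hull of a set of vertices. -/
def hull (H : Set V) : Set V :=
  {v | ∀ t : Fin (n + 1), ∃ z ∈ H, ∃ p : Quiver.Path z v, typeCount τ p t = 0}

/-- `w` is the shadow of `v` in `H`: `w ∈ H` and each `z ∈ H` is connected to `v`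
by an admissible path through `w`. -/
def IsShadow (H : Set V) (v w : V) : Prop :=
  w ∈ H ∧ ∀ z ∈ H, ∃ (p : Quiver.Path z w) (q : Quiver.Path w v), Admissible τ (p.comp q)

/-- `v` is a bridge of `v₁` and `v₂`: there are simple admissible paths from `v`
to `v₁` and to `v₂` with no arrow type in common. -/
def IsBridge (v₁ v₂ v : V) : Prop :=
  ∃ (γ₁ : Quiver.Path v v₁) (γ₂ : Quiver.Path v v₂),
    SimplePath τ γ₁ ∧ Admissible τ γ₁ ∧ SimplePath τ γ₂ ∧ Admissible τ γ₂ ∧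
      NoCommonType τ γ₁ γ₂

/-- Two distinct vertices are weakly neighbors if they admit a bridge. -/
def WeaklyNeighbors (v₁ v₂ : V) : Prop :=
  v₁ ≠ v₂ ∧ ∃ v : V, IsBridge τ v₁ v₂ v

/-- Composition of a chain of paths. -/
def chainComp (v : ℕ → V) (α : ∀ i : ℕ, Quiver.Path (v i) (v (i + 1))) :
    ∀ m : ℕ, Quiver.Path (v 0) (v m)
  | 0 => Quiver.Path.nil
  | (m + 1) => (chainComp v α m).comp (α m)

end QuiverDefs

section AbelianDefs

variable {k : Type*} [Field k]
variable {V : Type*} [Quiver.{w+1} V] {n : ℕ}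
variable {C : Type*} [Category C] [Abelian C] [Linear k C]

/-- The composition of the morphisms of `F` along a path. -/
def mapAlong (F : Prefunctor V C) : ∀ {a b : V}, Quiver.Path a b → (F.obj a ⟶ F.obj b)
  | _, _, Quiver.Path.nil => 𝟙 _
  | _, _, Quiver.Path.cons p e => mapAlong F p ≫ F.map e

variable (k) (τ : ∀ {a b : V}, (a ⟶ b) → Fin (n + 1))

/-- A weakly linked net: maps along two paths with the same endpoints, the second
admissible, agree up to a scalar, and maps along minimal circuits vanish. -/
structure IsWeaklyLinkedNet (F : Prefunctor V C) : Prop where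
  scalar : ∀ {a b : V} (γ₁ γ₂ : Quiver.Path a b), Admissible τ γ₂ →
    ∃ c : k, mapAlong F γ₁ = c • mapAlong F γ₂
  circuit : ∀ {a b : V} (γ : Quiver.Path a b), SimplePath τ γ → ¬ Admissible τ γ →
    mapAlong F γ = 0

/-- A linked net: a weakly linked net such that two admissible paths leaving the
same vertex with no arrow type in common have trivially intersecting kernels. -/
def IsLinkedNet (F : Prefunctor V C) : Prop :=
  IsWeaklyLinkedNet k τ F ∧
    ∀ {a b c : V} (γ₁ : Quiver.Path a b) (γ₂ : Quiver.Path a c),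
      Admissible τ γ₁ → Admissible τ γ₂ → NoCommonType τ γ₁ γ₂ →
      ∀ {T : C} (h : T ⟶ F.obj a),
        h ≫ mapAlong F γ₁ = 0 → h ≫ mapAlong F γ₂ = 0 → h = 0

variable {k}

/-- The class `φ^u_v` is zero. -/
def PhiZero (F : Prefunctor V C) (u v : V) : Prop :=
  ∀ p : Quiver.Path u v, Admissible τ p → mapAlong F p = 0

/-- Two vertices are unrelated for the net if the classes `φ^u_v` and `φ^v_u` vanish. -/
def Unrelated (F : Prefunctor V C) (u v : V) : Prop :=
  PhiZero τ F u v ∧ PhiZero τ F v u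

/-- The net is 1-generated by `H`. -/
def OneGenBy (F : Prefunctor V C) (H : Set V) : Prop :=
  ∀ v : V, ∃ u ∈ H, ∃ p : Quiver.Path u v, Epi (mapAlong F p)

/-- The net is generated by `H`. -/
def GeneratedBy (F : Prefunctor V C) (H : Set V) : Prop :=
  ∀ v : V, ∃ s : Finset ((u : V) × Quiver.Path u v),
    (∀ x ∈ s, x.1 ∈ H) ∧ s.sup (fun x => imageSubobject (mapAlong F x.2)) = ⊤

/-- The net is finitely generated. -/
def FinitelyGenerated (F : Prefunctor V C) : Prop :=
  ∃ H : Set V, H.Finite ∧ GeneratedBy F H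

/-- All objects of the net are simple objects. -/
def AllSimple (F : Prefunctor V C) : Prop := ∀ v : V, Simple (F.obj v)

/-- The net is locally finite. -/
def LocallyFinite (F : Prefunctor V C) : Prop :=
  ∀ v : V, ∃ ℓ : ℕ, ∀ (u : V) (p : Quiver.Path u v), ℓ < p.length → mapAlong F p = 0

/-- The net is pure: every epimorphism between associated objects is an isomorphism. -/
def PureRep (F : Prefunctor V C) : Prop :=
  ∀ (u v : V) (f : F.obj u ⟶ F.obj v), Epi f → IsIso f

/-- The net is exact: `Im φ^{v₁}_{v₂} = Ker φ^{v₂}_{v₁}` for all neighbors. -/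
def ExactRep (F : Prefunctor V C) : Prop :=
  ∀ u v : V, Neighbors τ u v → ∀ (p : Quiver.Path u v) (q : Quiver.Path v u),
    Admissible τ p → Admissible τ q →
      imageSubobject (mapAlong F p) = kernelSubobject (mapAlong F q)

/-- The representation `𝔳_H` assembled from a shadow function `sh` and maps `Gmap`. -/
def shadowPrefunctor (F : Prefunctor V C) (sh : V → V)
    (Gmap : ∀ {a b : V}, (a ⟶ b) → (F.obj (sh a) ⟶ F.obj (sh b))) : Prefunctor V C where
  obj v := F.obj (sh v)
  map e := Gmap e

variable (k)

/-- `(sh, Gmap)` is the data of an `H`-shadow representation of `F`. -/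
def IsShadowRep (H : Set V) (F : Prefunctor V C) (sh : V → V)
    (Gmap : ∀ {a b : V}, (a ⟶ b) → (F.obj (sh a) ⟶ F.obj (sh b))) : Prop :=
  (∀ v : V, IsShadow τ H v (sh v)) ∧
    ∀ {a b : V} (e : a ⟶ b),
      ((¬ ∃ (p : Quiver.Path (sh a) a) (q : Quiver.Path a b), Admissible τ (p.comp q)) →
        Gmap e = 0) ∧
      ((∃ (p : Quiver.Path (sh a) a) (q : Quiver.Path a b), Admissible τ (p.comp q)) →
        ∃ (c : k) (ρ : Quiver.Path (sh a) (sh b)), c ≠ 0 ∧ Admissible τ ρ ∧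
          Gmap e = c • mapAlong F ρ)

end AbelianDefs

section VectorDefs

variable {k : Type*} [Field k]
variable {V : Type*} [Quiver.{w+1} V] {n : ℕ}
variable {W : V → Type*} [∀ v, AddCommGroup (W v)] [∀ v, Module k (W v)]

/-- The composition of the linear maps of the representation along a path. -/
def mapAlongL (φ : ∀ {a b : V}, (a ⟶ b) → (W a →ₗ[k] W b)) :
    ∀ {a b : V}, Quiver.Path a b → (W a →ₗ[k] W b)
  | _, _, Quiver.Path.nil => LinearMap.id
  | _, _, Quiver.Path.cons p e => (φ e).comp (mapAlongL φ p)

variable (k) (τ : ∀ {a b : V}, (a ⟶ b) → Fin (n + 1))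
variable (φ : ∀ {a b : V}, (a ⟶ b) → (W a →ₗ[k] W b))

/-- A weakly linked net of vector spaces. -/
structure IsWeaklyLinkedNetL : Prop where
  scalar : ∀ {a b : V} (γ₁ γ₂ : Quiver.Path a b), Admissible τ γ₂ →
    ∃ c : k, mapAlongL φ γ₁ = c • mapAlongL φ γ₂
  circuit : ∀ {a b : V} (γ : Quiver.Path a b), SimplePath τ γ → ¬ Admissible τ γ →
    mapAlongL φ γ = 0

/-- A linked net of vector spaces. -/
def IsLinkedNetL : Prop :=
  IsWeaklyLinkedNetL k τ φ ∧
    ∀ {a b c : V} (γ₁ : Quiver.Path a b) (γ₂ : Quiver.Path a c),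
      Admissible τ γ₁ → Admissible τ γ₂ → NoCommonType τ γ₁ γ₂ →
      LinearMap.ker (mapAlongL φ γ₁) ⊓ LinearMap.ker (mapAlongL φ γ₂) = ⊥

/-- All spaces are nonzero of the same finite dimension. -/
def PureNontrivialL : Prop :=
  (∀ v : V, 0 < Module.finrank k (W v)) ∧
    ∀ u v : V, Module.finrank k (W u) = Module.finrank k (W v)

/-- The net of vector spaces is 1-generated by `H`. -/
def OneGenL (H : Set V) : Prop :=
  ∀ v : V, ∃ u ∈ H, ∃ p : Quiver.Path u v, Function.Surjective (mapAlongL φ p)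

/-- The net of vector spaces is generated by `H`. -/
def GeneratedL (H : Set V) : Prop :=
  ∀ v : V, ∃ s : Finset ((u : V) × Quiver.Path u v),
    (∀ x ∈ s, x.1 ∈ H) ∧ (⨆ x ∈ s, LinearMap.range (mapAlongL φ x.2)) = ⊤

/-- The net of vector spaces is finitely generated. -/
def FinGenL : Prop := ∃ H : Set V, H.Finite ∧ GeneratedL k φ H

/-- A subrepresentation of pure dimension one: a point of `LP(𝔳)`. -/
def IsLP (L : ∀ v : V, Submodule k (W v)) : Prop :=
  (∀ v : V, Module.finrank k (L v) = 1) ∧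
    ∀ (a b : V) (e : a ⟶ b), (L a).map (φ e) ≤ L b

/-- A point of `LP_H(𝔳)`: a tuple of one-dimensional subspaces indexed by `H` such
that the image of the subspace at `v` along any admissible path from `v` to `u`
is contained in the subspace at `u`, for all `v, u ∈ H`. -/
def IsLPH (H : Set V) (M : (v : V) → v ∈ H → Submodule k (W v)) : Prop :=
  (∀ (v : V) (hv : v ∈ H), Module.finrank k (M v hv) = 1) ∧
    ∀ (v : V) (hv : v ∈ H) (u : V) (hu : u ∈ H) (p : Quiver.Path v u),
      Admissible τ p → (M v hv).map (mapAlongL φ p) ≤ M u hu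

/-- The family `L` is generated by the vertex `v₀`. -/
def GenByVertexL (v₀ : V) (L : ∀ v : V, Submodule k (W v)) : Prop :=
  ∀ u : V, L u = ⨆ p : Quiver.Path v₀ u, (L v₀).map (mapAlongL φ p)

/-- The net of vector spaces is exact. -/
def ExactL : Prop :=
  ∀ u v : V, Neighbors τ u v → ∀ (p : Quiver.Path u v) (q : Quiver.Path v u),
    Admissible τ p → Admissible τ q →
      LinearMap.range (mapAlongL φ p) = LinearMap.ker (mapAlongL φ q)

end VectorDefs

section AuxProof

variable {V : Type*} [Quiver.{w+1} V] {n : ℕ} (τ : ∀ {a b : V}, (a ⟶ b) → Fin (n + 1))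

theorem typeCount_comp {a b c : V} (p : Quiver.Path a b) (q : Quiver.Path b c)
    (t : Fin (n + 1)) :
    typeCount τ (p.comp q) t = typeCount τ p t + typeCount τ q t := by
  induction q with
  | nil => simp [typeCount]
  | cons q e ih => simp [typeCount, ih]; omega

variable (hZ : IsZnQuiver τ)

/-- A chosen admissible path from `a` to `b`. -/
noncomputable def apath (a b : V) : Quiver.Path a b := (hZ.connAdm a b).choose

theorem apath_adm (a b : V) : Admissible τ (apath τ hZ a b) := (hZ.connAdm a b).choose_spec

/-- The type-count vector of the chosen admissible path. -/
noncomputable def Dvec (a b : V) (t : Fin (n + 1)) : ℕ := typeCount τ (apath τ hZ a b) t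

theorem Dvec_eq (a b : V) (t : Fin (n + 1)) :
    typeCount τ (apath τ hZ a b) t = Dvec τ hZ a b t := rfl

/-- Any path has counts equal to `Dvec` plus a constant. -/
theorem count_eq_Dvec_add {a b : V} (p : Quiver.Path a b) :
    ∃ d : ℕ, ∀ t, typeCount τ p t = Dvec τ hZ a b t + d := by
  obtain ⟨d, hd⟩ := (hZ.targetEq p (apath τ hZ a b)).mp rfl
  obtain ⟨t₀, ht₀⟩ := apath_adm τ hZ a b
  rw [Dvec_eq] at ht₀
  refine ⟨typeCount τ p t₀, fun t => ?_⟩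
  have h1 := hd t
  have h2 := hd t₀
  rw [Dvec_eq] at h1 h2
  omega

theorem Dvec_self (a : V) (t : Fin (n + 1)) : Dvec τ hZ a a t = 0 := by
  obtain ⟨d, hd⟩ := count_eq_Dvec_add τ hZ (Quiver.Path.nil : Quiver.Path a a)
  have := hd t
  simp only [typeCount] at this
  omega

theorem shadow_S {H : Set V} {v w : V} (hsh : IsShadow τ H v w) {z : V} (hz : z ∈ H) :
    ∃ t, Dvec τ hZ z w t = 0 ∧ Dvec τ hZ w v t = 0 := by
  obtain ⟨p, q, t, hadm⟩ := hsh.2 z hz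
  rw [typeCount_comp] at hadm
  obtain ⟨d1, h1⟩ := count_eq_Dvec_add τ hZ p
  obtain ⟨d2, h2⟩ := count_eq_Dvec_add τ hZ q
  rw [h1 t, h2 t] at hadm
  exact ⟨t, by omega, by omega⟩

end AuxProof

/-- Let `H` be a nonempty set of vertices of a `ℤⁿ`-quiver `Q`
with `P(H) = H`. Let `v₀, …, v_m` be vertices of `Q` forming an oriented
polygon, and let `w₀, …, w_m` be their respective shadows in `H`. Then
`w₀, …, w_m` form an oriented polygon in the relaxed sense where the
collections of arrow types are allowed to be empty. -/
theorem statement_10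
    {V : Type*} [Quiver.{w+1} V] {n : ℕ}
    (τ : ∀ {a b : V}, (a ⟶ b) → Fin (n + 1)) (hZ : IsZnQuiver τ)
    (H : Set V) (hne : H.Nonempty) (hhull : hull τ H = H)
    (m : ℕ) (v wv : ℕ → V)
    (I : ℕ → Set (Fin (n + 1)))
    (hIne : ∀ i, i < m → (I i).Nonempty)
    (hdisj : ∀ i, i < m → ∀ j, j < m → i ≠ j → Disjoint (I i) (I j))
    (hstep : ∀ i, i < m → StepBy τ (I i) (v i) (v (i + 1)))
    (hsh : ∀ i, i ≤ m → IsShadow τ H (v i) (wv i)) :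
    ∃ J : ℕ → Set (Fin (n + 1)),
      (∀ i, i < m → ∀ j, j < m → i ≠ j → Disjoint (J i) (J j)) ∧
      ∀ i, i < m → StepBy τ (J i) (wv i) (wv (i + 1)) := by
  classical
  -- Step lemma: for each `l < m`
  have stepL : ∀ l, ∃ (d : ℕ) (g : Fin (n + 1) → ℕ), l < m →
      (∀ t, g t ≤ 1) ∧ (∀ t, g t ≠ 0 ↔ t ∈ I l) ∧
      (∀ t, Dvec τ hZ (wv l) (wv (l + 1)) t + d ≤ 1) ∧
      (∀ t, Dvec τ hZ (wv (l + 1)) (v (l + 1)) t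
          + (Dvec τ hZ (wv l) (wv (l + 1)) t + d)
        = Dvec τ hZ (wv l) (v l) t + g t) := by
    intro l
    by_cases hl : l < m
    swap
    · exact ⟨0, fun _ => 0, fun h => absurd h hl⟩
    obtain ⟨pI, hsim, hsupp⟩ := hstep l hl
    -- the constant `k`
    obtain ⟨k, hk⟩ := count_eq_Dvec_add τ hZ
      ((apath τ hZ (wv (l + 1)) (wv l)).comp (apath τ hZ (wv l) (wv (l + 1))))
    simp only [typeCount_comp, Dvec_eq, Dvec_self] at hk
    -- the constant `σ`
    obtain ⟨σ, hσ⟩ := count_eq_Dvec_add τ hZ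
      ((apath τ hZ (wv (l + 1)) (wv l)).comp
        ((apath τ hZ (wv l) (v l)).comp pI))
    simp only [typeCount_comp, Dvec_eq] at hσ
    -- shadow conditions
    obtain ⟨t₀, ht₀1, ht₀2⟩ := shadow_S τ hZ (hsh l hl.le) (hsh (l + 1) hl).1
    obtain ⟨t₁, ht₁1, ht₁2⟩ := shadow_S τ hZ (hsh (l + 1) hl) (hsh l hl.le).1
    have h7 : typeCount τ pI t₀ ≤ 1 := hsim t₀
    refine ⟨σ - k, typeCount τ pI, fun _ =>
      ⟨fun t => hsim t, hsupp, fun t => ?_, fun t => ?_⟩⟩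
    · have h1 := hk t; have h2 := hk t₀; have h3 := hk t₁
      have h4 := hσ t; have h5 := hσ t₀; have h6 := hσ t₁
      omega
    · have h1 := hk t; have h2 := hk t₀; have h3 := hk t₁
      have h4 := hσ t; have h5 := hσ t₀; have h6 := hσ t₁
      omega
  choose d g hdg using stepL
  -- chain paths along the shadows
  have chainP : ∀ a b : ℕ, a ≤ b → ∃ p : Quiver.Path (wv a) (wv b),
      ∀ t, typeCount τ p t
        = ∑ l ∈ Finset.Ico a b, Dvec τ hZ (wv l) (wv (l + 1)) t := by
    intro a b hab
    induction b, hab using Nat.le_induction with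
    | base => exact ⟨Quiver.Path.nil, fun t => by simp [typeCount]⟩
    | succ b hab ih =>
      obtain ⟨p, hp⟩ := ih
      refine ⟨p.comp (apath τ hZ (wv b) (wv (b + 1))), fun t => ?_⟩
      rw [typeCount_comp, hp, Finset.sum_Ico_succ_top hab, Dvec_eq]
  -- key asymmetric disjointness
  have key : ∀ i j, i < j → j < m → ∀ t : Fin (n + 1),
      Dvec τ hZ (wv i) (wv (i + 1)) t ≠ 0 →
      Dvec τ hZ (wv j) (wv (j + 1)) t ≠ 0 → False := by
    intro i j hij hjm ts hCi hCj
    have him : i < m := hij.trans hjm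
    -- the chain identity
    have hchain : ∀ b, i ≤ b → b < m → ∀ t,
        Dvec τ hZ (wv (b + 1)) (v (b + 1)) t
          + ∑ l ∈ Finset.Ico i (b + 1), (Dvec τ hZ (wv l) (wv (l + 1)) t + d l)
        = Dvec τ hZ (wv i) (v i) t + ∑ l ∈ Finset.Ico i (b + 1), g l t := by
      intro b hib
      induction b, hib using Nat.le_induction with
      | base =>
        intro hb t
        simp only [Nat.Ico_succ_singleton, Finset.sum_singleton]
        exact ((hdg i hb).2.2.2) t
      | succ b hib ih =>
        intro hb t
        have h1 := ih (by omega) t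
        have h2 := ((hdg (b + 1) hb).2.2.2) t
        rw [Finset.sum_Ico_succ_top (show i ≤ b + 1 by omega)
            (fun l => Dvec τ hZ (wv l) (wv (l + 1)) t + d l),
          Finset.sum_Ico_succ_top (show i ≤ b + 1 by omega) (fun l => g l t)]
        omega
    have hch := hchain j (le_of_lt hij) hjm
    -- the loop constant `s`
    obtain ⟨pc, hpc⟩ := chainP i (j + 1) (by omega)
    obtain ⟨s, hs⟩ := count_eq_Dvec_add τ hZ
      ((apath τ hZ (wv (j + 1)) (wv i)).comp pc)
    simp only [typeCount_comp, Dvec_eq, Dvec_self] at hs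
    have hloop : ∀ t, Dvec τ hZ (wv (j + 1)) (wv i) t
        + ∑ l ∈ Finset.Ico i (j + 1), Dvec τ hZ (wv l) (wv (l + 1)) t = s := by
      intro t
      have := hs t
      rw [hpc t] at this
      omega
    -- the coordinate `q`
    obtain ⟨q, hq1, hq2⟩ := shadow_S τ hZ (hsh i him.le) (hsh (j + 1) hjm).1
    -- `s ≥ 2`
    have hmemi : i ∈ Finset.Ico i (j + 1) := Finset.mem_Ico.mpr ⟨le_refl i, by omega⟩
    have hmemj : j ∈ Finset.Ico i (j + 1) := Finset.mem_Ico.mpr ⟨hij.le, by omega⟩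
    have hsub : ({i, j} : Finset ℕ) ⊆ Finset.Ico i (j + 1) := by
      intro x hx
      simp only [Finset.mem_insert, Finset.mem_singleton] at hx
      rcases hx with rfl | rfl
      exacts [hmemi, hmemj]
    have hs2 : 2 ≤ s := by
      have h1 := hloop ts
      have h2 : ∑ l ∈ ({i, j} : Finset ℕ), Dvec τ hZ (wv l) (wv (l + 1)) ts
          ≤ ∑ l ∈ Finset.Ico i (j + 1), Dvec τ hZ (wv l) (wv (l + 1)) ts :=
        Finset.sum_le_sum_of_subset hsub
      rw [Finset.sum_pair hij.ne] at h2
      omega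
    -- `∑ g l q ≤ 1`
    have hgle : ∑ l ∈ Finset.Ico i (j + 1), g l q ≤ 1 := by
      by_cases hex : ∃ l₀ ∈ Finset.Ico i (j + 1), g l₀ q ≠ 0
      · obtain ⟨l₀, hl₀mem, hl₀⟩ := hex
        have hl₀m : l₀ < m := by
          have := Finset.mem_Ico.mp hl₀mem; omega
        have heq : ∑ l ∈ Finset.Ico i (j + 1), g l q = g l₀ q := by
          refine Finset.sum_eq_single_of_mem l₀ hl₀mem (fun l hlmem hne => ?_)
          have hlm : l < m := by
            have := Finset.mem_Ico.mp hlmem; omega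
          by_contra hgl
          have hqI : q ∈ I l := ((hdg l hlm).2.1 q).mp hgl
          have hqI0 : q ∈ I l₀ := ((hdg l₀ hl₀m).2.1 q).mp hl₀
          exact Set.disjoint_left.mp (hdisj l hlm l₀ hl₀m hne) hqI hqI0
        rw [heq]
        exact (hdg l₀ hl₀m).1 q
      · push_neg at hex
        rw [Finset.sum_eq_zero hex]
        omega
    -- assemble the contradiction at `q`
    have hchq := hch q
    have hloopq := hloop q
    have hsumle : ∑ l ∈ Finset.Ico i (j + 1), Dvec τ hZ (wv l) (wv (l + 1)) q
        ≤ ∑ l ∈ Finset.Ico i (j + 1), (Dvec τ hZ (wv l) (wv (l + 1)) q + d l) :=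
      Finset.sum_le_sum (fun l _ => Nat.le_add_right _ _)
    omega
  refine ⟨fun l => {t | Dvec τ hZ (wv l) (wv (l + 1)) t ≠ 0}, ?_, ?_⟩
  · intro i hi j hj hij
    rw [Set.disjoint_left]
    intro t hti htj
    rcases lt_or_gt_of_ne hij with h | h
    · exact key i j h hj t hti htj
    · exact key j i h hi t htj hti
  · intro l hl
    refine ⟨apath τ hZ (wv l) (wv (l + 1)), fun t => ?_, fun t => ?_⟩
    · have h := ((hdg l hl).2.2.1) t
      show Dvec τ hZ (wv l) (wv (l + 1)) t ≤ 1
      omega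
    · show Dvec τ hZ (wv l) (wv (l + 1)) t ≠ 0 ↔ _
      exact Iff.rfl

end LNet
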